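/- Under the standing hypotheses, let η̃ > 0 and assume 0 < η < e^{σ}, e^{σ} + η < 1, log(1 + ηe^{−σ}) < η̃ and log(1/(1 − ηe^{−σ})) < η̃. Let n ∈ ℕ satisfy ((n+1)/n)·log(1 + ηe^{−σ}) < η̃ and ((n+1)/n)·log(1/(1 − ηe^{−σ})) < η̃, and let x ∈ B₁ satisfy |P_U G(j+1,x)| ≤ 1 for j = 0,…,n−1. Then for every t ∈ [0,1]: e^{(σ−η̃)(t+n)}|P_L x| ≤ |P_L G(t+n,x)| ≤ e^{(σ+η̃)(t+n)}|P_L x| and e^{(u−η̃)(t+n)}|P_U x| ≤ |P_U G(t+n,x)| ≤ e^{(u+η̃)(t+n)}|P_U x|. -/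

import Mathlib

noncomputable section
open Real Set

abbrev R3 := EuclideanSpace ℝ (Fin 3)

/-- Orthogonal projection onto `L = ℝe₁ ⊕ ℝe₂`. -/
def PL (x : R3) : R3 := WithLp.toLp 2 fun (i : Fin 3) => if (i : ℕ) = 2 then 0 else x i

/-- Orthogonal projection onto `U = ℝe₃`. -/
def PU (x : R3) : R3 := WithLp.toLp 2 fun (i : Fin 3) => if (i : ℕ) = 2 then x i else 0

/-- The plane `L = ℝe₁ ⊕ ℝe₂`. -/
def Lset : Set R3 := {x | x 2 = 0}

/-- The line `U = ℝe₃`. -/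
def Uset : Set R3 := {x | x 0 = 0 ∧ x 1 = 0}

/-- `B₁ = {x : |P_L x| ≤ 1, |P_U x| ≤ 1}`. -/
def B1 : Set R3 := {x | ‖PL x‖ ≤ 1 ∧ ‖PU x‖ ≤ 1}

/-- The linearized flow `T(t)`. -/
def Tmap (σ μ u t : ℝ) (x : R3) : R3 := WithLp.toLp 2 fun (i : Fin 3) =>
  if (i : ℕ) = 0 then exp (σ * t) * (cos (μ * t) * x 0 + sin (μ * t) * x 1)
  else if (i : ℕ) = 1 then exp (σ * t) * (-(sin (μ * t)) * x 0 + cos (μ * t) * x 1)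
  else exp (u * t) * x 2

/-- A C¹ flow on ℝ³. -/
def IsC1Flow (G : ℝ → R3 → R3) : Prop :=
  ContDiff ℝ 1 (fun p : ℝ × R3 => G p.1 p.2) ∧ (∀ x, G 0 x = x) ∧
    ∀ s t x, G (t + s) x = G t (G s x)

/-- `M` is invariant under the flow `G` in the set `N`. -/
def InvariantIn (G : ℝ → R3 → R3) (M N : Set R3) : Prop :=
  ∀ x ∈ M ∩ N, ∀ I : Set ℝ, (0 : ℝ) ∈ I → I.OrdConnected →
    (∀ t ∈ I, G t x ∈ N) → ∀ t ∈ I, G t x ∈ M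

/-!
Since `G(t, P_U y)` stays in `U`, the mean value inequality along the segment from `P_U y` to `y`
puts `P_L G(t, y)` within `η |P_L y|` of `T(t) P_L y`, whose norm is `e^{σt} |P_L y|`; symmetrically
for `P_U`. As `η ≤ η e^{-σ} e^{κt}` for `t ∈ [0, 1]` and `κ ∈ {σ, u}`, each component is scaled by
a factor between `(1 - η e^{-σ}) e^{κt}` and `(1 + η e^{-σ}) e^{κt}`. The orbit stays in `B₁` at
integer times (the `L`-component contracts since `e^σ + η < 1`, the `U`-component by assumption),
so these factors multiply; the conditions on `n` bound `(1 ± η e^{-σ})^{±(n+1)}` by `e^{η̃ (t+n)}`.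
-/

open Metric

theorem norm_image_add_sub_sub_le_of_norm_fderiv_apply_sub_le
    {E F : Type*} [NormedAddCommGroup E] [NormedSpace ℝ E]
    [NormedAddCommGroup F] [NormedSpace ℝ F] {f : E → F} (hf : Differentiable ℝ f)
    {a v : E} {w : F} {C : ℝ}
    (hC : ∀ s ∈ Icc (0:ℝ) 1, ‖fderiv ℝ f (a + s • v) v - w‖ ≤ C) :
    ‖f (a + v) - f a - w‖ ≤ C := by
  have hderiv : ∀ s ∈ Icc (0:ℝ) 1, HasDerivWithinAt (fun s : ℝ => f (a + s • v) - s • w)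
      (fderiv ℝ f (a + s • v) v - w) (Icc 0 1) s := by
    intro s _
    have hline : HasDerivAt (fun s : ℝ => a + s • v) v s := by
      simpa using ((hasDerivAt_id s).smul_const v).const_add a
    have hw : HasDerivAt (fun s : ℝ => s • w) w s := by
      simpa using (hasDerivAt_id s).smul_const w
    exact (((hf _).hasFDerivAt.comp_hasDerivAt s hline).sub hw).hasDerivWithinAt
  have h := norm_image_sub_le_of_norm_deriv_le_segment' hderiv
    (fun s hs => hC s (Ico_subset_Icc_self hs)) 1 ⟨zero_le_one, le_rfl⟩
  simpa [sub_right_comm] using h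

theorem le_and_le_of_abs_sub_mul_le {a b l η c : ℝ} (hb : 0 ≤ b) (h : |a - l * b| ≤ η * b)
    (hη : η ≤ c * l) : (1 - c) * l * b ≤ a ∧ a ≤ (1 + c) * l * b := by
  have := mul_le_mul_of_nonneg_right hη hb
  constructor <;> linarith [(abs_le.mp h).1, (abs_le.mp h).2]

theorem pow_succ_le_exp_mul {a ε t : ℝ} {n : ℕ} (ha : 0 < a) (hn : 0 < n) (hε : 0 ≤ ε)
    (ht : 0 ≤ t) (h : ((n : ℝ) + 1) / n * log a < ε) : a ^ (n + 1) ≤ exp (ε * (t + n)) := by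
  have hn' : (0:ℝ) < n := by exact_mod_cast hn
  have hlt : ((n : ℝ) + 1) * log a < ε * n := by
    calc ((n : ℝ) + 1) * log a = ((n : ℝ) + 1) / n * log a * n := by field_simp
      _ < ε * n := mul_lt_mul_of_pos_right h hn'
  rw [← exp_log (pow_pos ha _), log_pow, exp_le_exp]
  push_cast
  nlinarith

theorem exp_neg_mul_le_pow_succ {a ε t : ℝ} {n : ℕ} (ha : 0 < a) (hn : 0 < n) (hε : 0 ≤ ε)
    (ht : 0 ≤ t) (h : ((n : ℝ) + 1) / n * log (1 / a) < ε) :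
    exp (-(ε * (t + n))) ≤ a ^ (n + 1) := by
  have hinv := pow_succ_le_exp_mul (one_div_pos.mpr ha) hn hε ht h
  rw [one_div_pow] at hinv
  rw [exp_neg]
  exact inv_le_of_inv_le₀ (pow_pos ha _) (by simpa using hinv)

theorem exp_bounds_of_pow_bounds {lo hi κ ε s N M : ℝ} {m : ℕ} (hN : 0 ≤ N)
    (hlo : exp (-(ε * s)) ≤ lo ^ m) (hhi : hi ^ m ≤ exp (ε * s))
    (h : lo ^ m * exp (κ * s) * N ≤ M ∧ M ≤ hi ^ m * exp (κ * s) * N) :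
    exp ((κ - ε) * s) * N ≤ M ∧ M ≤ exp ((κ + ε) * s) * N := by
  have hsub : exp ((κ - ε) * s) = exp (-(ε * s)) * exp (κ * s) := by rw [← exp_add]; ring_nf
  have hadd : exp ((κ + ε) * s) = exp (ε * s) * exp (κ * s) := by rw [← exp_add]; ring_nf
  rw [hsub, hadd]
  constructor
  · exact le_trans (by gcongr) h.1
  · exact h.2.trans (by gcongr)

theorem bounds_of_unit_time_bounds {X : Type*} {G : ℝ → X → X} (hG0 : ∀ x, G 0 x = x)
    (hGadd : ∀ s t x, G (t + s) x = G t (G s x)) {N : X → ℝ} {S : Set X} {lo hi κ : ℝ}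
    (hlo : 0 ≤ lo) (hhi : 0 ≤ hi)
    (hstep : ∀ y ∈ S, ∀ t ∈ Icc (0:ℝ) 1,
      lo * exp (κ * t) * N y ≤ N (G t y) ∧ N (G t y) ≤ hi * exp (κ * t) * N y)
    {x : X} (n : ℕ) (hS : ∀ j ≤ n, G j x ∈ S) (t : ℝ) (ht : t ∈ Icc (0:ℝ) 1) :
    lo ^ (n + 1) * exp (κ * (t + n)) * N x ≤ N (G (t + n) x) ∧
      N (G (t + n) x) ≤ hi ^ (n + 1) * exp (κ * (t + n)) * N x := by
  induction n generalizing t with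
  | zero => simpa using hstep x (by simpa [hG0] using hS 0 le_rfl) t ht
  | succ n ih =>
    obtain ⟨ih_lo, ih_hi⟩ := ih (fun j hj => hS j (by omega)) 1 ⟨zero_le_one, le_rfl⟩
    have hmem : G (1 + n) x ∈ S := by simpa [add_comm] using hS (n + 1) le_rfl
    obtain ⟨st_lo, st_hi⟩ := hstep _ hmem t ht
    have hflow : G (t + ↑(n + 1)) x = G t (G (1 + n) x) := by
      rw [← hGadd]; push_cast; ring_nf
    have hexp : exp (κ * (t + ↑(n + 1))) = exp (κ * t) * exp (κ * (1 + n)) := by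
      rw [← exp_add]; push_cast; ring_nf
    rw [hflow, hexp]
    constructor
    · calc lo ^ (n + 1 + 1) * (exp (κ * t) * exp (κ * (1 + n))) * N x
            = lo * exp (κ * t) * (lo ^ (n + 1) * exp (κ * (1 + n)) * N x) := by ring
        _ ≤ lo * exp (κ * t) * N (G (1 + n) x) := by gcongr
        _ ≤ N (G t (G (1 + n) x)) := st_lo
    · calc N (G t (G (1 + n) x)) ≤ hi * exp (κ * t) * N (G (1 + n) x) := st_hi
        _ ≤ hi * exp (κ * t) * (hi ^ (n + 1) * exp (κ * (1 + n)) * N x) := by gcongr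
        _ = hi ^ (n + 1 + 1) * (exp (κ * t) * exp (κ * (1 + n))) * N x := by ring

theorem PL_sub (x y : R3) : PL (x - y) = PL x - PL y := by
  ext i; by_cases h : (i : ℕ) = 2 <;> simp [PL, h]

theorem PU_sub (x y : R3) : PU (x - y) = PU x - PU y := by
  ext i; by_cases h : (i : ℕ) = 2 <;> simp [PU, h]

theorem PU_add_PL (x : R3) : PU x + PL x = x := by
  ext i; by_cases h : (i : ℕ) = 2 <;> simp [PL, PU, h]

theorem PL_PU_add_smul_PL (y : R3) (s : ℝ) : PL (PU y + s • PL y) = s • PL y := by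
  ext i; by_cases h : (i : ℕ) = 2 <;> simp [PL, PU, h]

theorem PU_PU_add_smul_PL (y : R3) (s : ℝ) : PU (PU y + s • PL y) = PU y := by
  ext i; by_cases h : (i : ℕ) = 2 <;> simp [PL, PU, h]

theorem PL_PL_add_smul_PU (y : R3) (s : ℝ) : PL (PL y + s • PU y) = PL y := by
  ext i; by_cases h : (i : ℕ) = 2 <;> simp [PL, PU, h]

theorem PU_PL_add_smul_PU (y : R3) (s : ℝ) : PU (PL y + s • PU y) = s • PU y := by
  ext i; by_cases h : (i : ℕ) = 2 <;> simp [PL, PU, h]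

theorem norm_PL_le (x : R3) : ‖PL x‖ ≤ ‖x‖ := by
  simp only [EuclideanSpace.norm_eq, Fin.sum_univ_three]
  gcongr <;> simp [PL]

theorem norm_PU_le (x : R3) : ‖PU x‖ ≤ ‖x‖ := by
  simp only [EuclideanSpace.norm_eq, Fin.sum_univ_three]
  gcongr <;> simp [PU]

theorem PL_mem_Lset (x : R3) : PL x ∈ Lset := by simp [Lset, PL]

theorem PU_mem_Uset (x : R3) : PU x ∈ Uset := by simp [Uset, PU]

theorem PL_eq_zero_of_mem_Uset {z : R3} (hz : z ∈ Uset) : PL z = 0 := by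
  ext i; fin_cases i <;> simp [PL, hz.1, hz.2]

theorem PU_eq_zero_of_mem_Lset {z : R3} (hz : z ∈ Lset) : PU z = 0 := by
  ext i; fin_cases i <;> simp [PU, show z 2 = 0 from hz]

theorem PU_add_smul_PL_mem_B1 {y : R3} (hy : y ∈ B1) {s : ℝ} (hs : s ∈ Icc (0:ℝ) 1) :
    PU y + s • PL y ∈ B1 := by
  refine ⟨?_, by simpa [PU_PU_add_smul_PL] using hy.2⟩
  rw [PL_PU_add_smul_PL, norm_smul, Real.norm_of_nonneg hs.1]
  exact mul_le_one₀ hs.2 (norm_nonneg _) hy.1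

theorem PL_add_smul_PU_mem_B1 {y : R3} (hy : y ∈ B1) {s : ℝ} (hs : s ∈ Icc (0:ℝ) 1) :
    PL y + s • PU y ∈ B1 := by
  refine ⟨by simpa [PL_PL_add_smul_PU] using hy.1, ?_⟩
  rw [PU_PL_add_smul_PU, norm_smul, Real.norm_of_nonneg hs.1]
  exact mul_le_one₀ hs.2 (norm_nonneg _) hy.2

theorem PL_Tmap_PL (σ μ u t : ℝ) (x : R3) : PL (Tmap σ μ u t (PL x)) = Tmap σ μ u t (PL x) := by
  ext i; fin_cases i <;> simp [PL, Tmap]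

theorem PU_Tmap_PU (σ μ u t : ℝ) (x : R3) : PU (Tmap σ μ u t (PU x)) = Tmap σ μ u t (PU x) := by
  ext i; fin_cases i <;> simp [PU, Tmap]

theorem norm_Tmap_PL (σ μ u t : ℝ) (x : R3) :
    ‖Tmap σ μ u t (PL x)‖ = exp (σ * t) * ‖PL x‖ := by
  simp only [EuclideanSpace.norm_eq, Fin.sum_univ_three, Tmap, PL, Real.norm_eq_abs, sq_abs]
  norm_num
  have hrot : (exp (σ * t) * (cos (μ * t) * x 0 + sin (μ * t) * x 1)) ^ 2
      + (exp (σ * t) * (-(sin (μ * t) * x 0) + cos (μ * t) * x 1)) ^ 2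
      = exp (σ * t) ^ 2 * (x 0 ^ 2 + x 1 ^ 2) := by
    linear_combination exp (σ * t) ^ 2 * (x 0 ^ 2 + x 1 ^ 2) * sin_sq_add_cos_sq (μ * t)
  rw [hrot, sqrt_mul (sq_nonneg _), sqrt_sq (exp_pos _).le]

theorem norm_Tmap_PU (σ μ u t : ℝ) (x : R3) :
    ‖Tmap σ μ u t (PU x)‖ = exp (u * t) * ‖PU x‖ := by
  simp only [EuclideanSpace.norm_eq, Fin.sum_univ_three, Tmap, PU, Real.norm_eq_abs, sq_abs]
  norm_num
  rw [mul_pow, sqrt_mul (sq_nonneg _), sqrt_sq (exp_pos _).le]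

theorem IsC1Flow.differentiable {G : ℝ → R3 → R3} (hG : IsC1Flow G) (t : ℝ) :
    Differentiable ℝ (G t) := fun z =>
  (hG.1.differentiable one_ne_zero (t, z)).comp z
    ((differentiableAt_const t).prodMk differentiableAt_id)

theorem InvariantIn.apply_mem {G : ℝ → R3 → R3} {M N : Set R3} (hM : InvariantIn G M N)
    {x : R3} (hG0 : G 0 x = x) (hxM : x ∈ M) (hGN : ∀ s ∈ Icc (0:ℝ) 1, G s x ∈ N)
    {t : ℝ} (ht : t ∈ Icc (0:ℝ) 1) : G t x ∈ M :=
  hM x ⟨hxM, hG0 ▸ hGN 0 ⟨le_rfl, zero_le_one⟩⟩ (Icc 0 1) ⟨le_rfl, zero_le_one⟩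
    ordConnected_Icc hGN t ht

section OneStep

variable {σ μ u η rB t : ℝ} {G : ℝ → R3 → R3}

theorem norm_PL_flow_sub_Tmap_le (hG : IsC1Flow G)
    (hD2 : ∀ x ∈ B1, ∀ y : R3, ‖fderiv ℝ (G t) x y - Tmap σ μ u t y‖ ≤ η * ‖y‖)
    (hGB : ∀ s ∈ Icc (0:ℝ) 1, ∀ x ∈ B1, G s x ∈ closedBall (0 : R3) rB)
    (hUinv : InvariantIn G Uset (closedBall 0 rB)) (ht : t ∈ Icc (0:ℝ) 1)
    {y : R3} (hy : y ∈ B1) :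
    ‖PL (G t y) - Tmap σ μ u t (PL y)‖ ≤ η * ‖PL y‖ := by
  have hPUy : PU y ∈ B1 := by simpa using PU_add_smul_PL_mem_B1 hy (s := 0) ⟨le_rfl, zero_le_one⟩
  have hGU : G t (PU y) ∈ Uset :=
    hUinv.apply_mem (hG.2.1 _) (PU_mem_Uset y) (fun s hs => hGB s hs _ hPUy) ht
  have hseg : ‖G t (PU y + PL y) - G t (PU y) - Tmap σ μ u t (PL y)‖ ≤ η * ‖PL y‖ :=
    norm_image_add_sub_sub_le_of_norm_fderiv_apply_sub_le (hG.differentiable t)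
      fun s hs => hD2 _ (PU_add_smul_PL_mem_B1 hy hs) _
  calc ‖PL (G t y) - Tmap σ μ u t (PL y)‖
      = ‖PL (G t (PU y + PL y) - G t (PU y) - Tmap σ μ u t (PL y))‖ := by
        rw [PL_sub, PL_sub, PL_eq_zero_of_mem_Uset hGU, PL_Tmap_PL, PU_add_PL, sub_zero]
    _ ≤ η * ‖PL y‖ := (norm_PL_le _).trans hseg

theorem norm_PU_flow_sub_Tmap_le (hG : IsC1Flow G)
    (hD2 : ∀ x ∈ B1, ∀ y : R3, ‖fderiv ℝ (G t) x y - Tmap σ μ u t y‖ ≤ η * ‖y‖)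
    (hGB : ∀ s ∈ Icc (0:ℝ) 1, ∀ x ∈ B1, G s x ∈ closedBall (0 : R3) rB)
    (hLinv : InvariantIn G Lset (closedBall 0 rB)) (ht : t ∈ Icc (0:ℝ) 1)
    {y : R3} (hy : y ∈ B1) :
    ‖PU (G t y) - Tmap σ μ u t (PU y)‖ ≤ η * ‖PU y‖ := by
  have hPLy : PL y ∈ B1 := by simpa using PL_add_smul_PU_mem_B1 hy (s := 0) ⟨le_rfl, zero_le_one⟩
  have hGL : G t (PL y) ∈ Lset :=
    hLinv.apply_mem (hG.2.1 _) (PL_mem_Lset y) (fun s hs => hGB s hs _ hPLy) ht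
  have hseg : ‖G t (PL y + PU y) - G t (PL y) - Tmap σ μ u t (PU y)‖ ≤ η * ‖PU y‖ :=
    norm_image_add_sub_sub_le_of_norm_fderiv_apply_sub_le (hG.differentiable t)
      fun s hs => hD2 _ (PL_add_smul_PU_mem_B1 hy hs) _
  calc ‖PU (G t y) - Tmap σ μ u t (PU y)‖
      = ‖PU (G t (PL y + PU y) - G t (PL y) - Tmap σ μ u t (PU y))‖ := by
        rw [PU_sub, PU_sub, PU_eq_zero_of_mem_Lset hGL, PU_Tmap_PU, add_comm, PU_add_PL,
          sub_zero]
    _ ≤ η * ‖PU y‖ := (norm_PU_le _).trans hseg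

theorem PL_flow_bounds (hσ : σ ≤ 0) (hη : 0 ≤ η) (hG : IsC1Flow G)
    (hD2 : ∀ x ∈ B1, ∀ y : R3, ‖fderiv ℝ (G t) x y - Tmap σ μ u t y‖ ≤ η * ‖y‖)
    (hGB : ∀ s ∈ Icc (0:ℝ) 1, ∀ x ∈ B1, G s x ∈ closedBall (0 : R3) rB)
    (hUinv : InvariantIn G Uset (closedBall 0 rB)) (ht : t ∈ Icc (0:ℝ) 1)
    {y : R3} (hy : y ∈ B1) :
    (1 - η * exp (-σ)) * exp (σ * t) * ‖PL y‖ ≤ ‖PL (G t y)‖ ∧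
      ‖PL (G t y)‖ ≤ (1 + η * exp (-σ)) * exp (σ * t) * ‖PL y‖ := by
  refine le_and_le_of_abs_sub_mul_le (η := η) (norm_nonneg _) ?_ ?_
  · rw [← norm_Tmap_PL σ μ u t y]
    exact (abs_norm_sub_norm_le _ _).trans (norm_PL_flow_sub_Tmap_le hG hD2 hGB hUinv ht hy)
  · calc η = η * 1 := (mul_one η).symm
      _ ≤ η * exp (-σ + σ * t) := by gcongr; exact one_le_exp (by nlinarith [ht.2])
      _ = η * exp (-σ) * exp (σ * t) := by rw [exp_add, mul_assoc]

theorem PU_flow_bounds (hσ : σ ≤ 0) (hu : 0 ≤ u) (hη : 0 ≤ η) (hG : IsC1Flow G)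
    (hD2 : ∀ x ∈ B1, ∀ y : R3, ‖fderiv ℝ (G t) x y - Tmap σ μ u t y‖ ≤ η * ‖y‖)
    (hGB : ∀ s ∈ Icc (0:ℝ) 1, ∀ x ∈ B1, G s x ∈ closedBall (0 : R3) rB)
    (hLinv : InvariantIn G Lset (closedBall 0 rB)) (ht : t ∈ Icc (0:ℝ) 1)
    {y : R3} (hy : y ∈ B1) :
    (1 - η * exp (-σ)) * exp (u * t) * ‖PU y‖ ≤ ‖PU (G t y)‖ ∧
      ‖PU (G t y)‖ ≤ (1 + η * exp (-σ)) * exp (u * t) * ‖PU y‖ := by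
  refine le_and_le_of_abs_sub_mul_le (η := η) (norm_nonneg _) ?_ ?_
  · rw [← norm_Tmap_PU σ μ u t y]
    exact (abs_norm_sub_norm_le _ _).trans (norm_PU_flow_sub_Tmap_le hG hD2 hGB hLinv ht hy)
  · calc η = η * 1 := (mul_one η).symm
      _ ≤ η * exp (-σ + u * t) := by gcongr; exact one_le_exp (by nlinarith [ht.1])
      _ = η * exp (-σ) * exp (u * t) := by rw [exp_add, mul_assoc]

end OneStep

theorem flow_nat_mem_B1 {G : ℝ → R3 → R3} (hG : IsC1Flow G)
    (hcontr : ∀ y ∈ B1, ‖PL (G 1 y)‖ ≤ ‖PL y‖) {x : R3} (hx : x ∈ B1) {n : ℕ}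
    (hPU : ∀ j : ℕ, j < n → ‖PU (G ((j : ℝ) + 1) x)‖ ≤ 1) : ∀ j ≤ n, G j x ∈ B1 := by
  intro j hj
  induction j with
  | zero => simpa [hG.2.1] using hx
  | succ j ih =>
    have hprev := ih (by omega)
    have hflow : G ↑(j + 1) x = G 1 (G j x) := by rw [← hG.2.2]; push_cast; ring_nf
    exact ⟨hflow ▸ (hcontr _ hprev).trans hprev.1, by exact_mod_cast hPU j (by omega)⟩

theorem statement3_general
    (u σ μ η rB : ℝ) (hu : 0 < u) (hσ : σ < 0) (hη : 0 < η)
    (G : ℝ → R3 → R3) (hG : IsC1Flow G)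
    (hD2 : ∀ t ∈ Icc (0:ℝ) 1, ∀ x ∈ B1, ∀ y : R3,
      ‖fderiv ℝ (G t) x y - Tmap σ μ u t y‖ ≤ η * ‖y‖)
    (hGB : ∀ t ∈ Icc (0:ℝ) 1, ∀ x ∈ B1, G t x ∈ Metric.closedBall (0 : R3) rB)
    (hLinv : InvariantIn G Lset (Metric.closedBall 0 rB))
    (hUinv : InvariantIn G Uset (Metric.closedBall 0 rB))
    (ηt : ℝ) (hηt : 0 < ηt)
    (hησ : η < exp σ) (hησ1 : exp σ + η < 1)
    (n : ℕ) (hn : 0 < n)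
    (hn1 : ((n : ℝ) + 1) / n * Real.log (1 + η * exp (-σ)) < ηt)
    (hn2 : ((n : ℝ) + 1) / n * Real.log (1 / (1 - η * exp (-σ))) < ηt)
    (x : R3) (hx : x ∈ B1)
    (hPU : ∀ j : ℕ, j < n → ‖PU (G ((j : ℝ) + 1) x)‖ ≤ 1) :
    ∀ t ∈ Icc (0:ℝ) 1,
      exp ((σ - ηt) * (t + n)) * ‖PL x‖ ≤ ‖PL (G (t + n) x)‖ ∧
      ‖PL (G (t + n) x)‖ ≤ exp ((σ + ηt) * (t + n)) * ‖PL x‖ ∧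
      exp ((u - ηt) * (t + n)) * ‖PU x‖ ≤ ‖PU (G (t + n) x)‖ ∧
      ‖PU (G (t + n) x)‖ ≤ exp ((u + ηt) * (t + n)) * ‖PU x‖ := by
  intro t ht
  have hc : η * exp (-σ) < 1 := by
    simpa [← exp_add] using mul_lt_mul_of_pos_right hησ (exp_pos (-σ))
  have hstepL := fun (y : R3) (hy : y ∈ B1) (s : ℝ) (hs : s ∈ Icc (0:ℝ) 1) =>
    PL_flow_bounds hσ.le hη.le hG (hD2 s hs) hGB hUinv hs hy
  have hstepU := fun (y : R3) (hy : y ∈ B1) (s : ℝ) (hs : s ∈ Icc (0:ℝ) 1) =>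
    PU_flow_bounds hσ.le hu.le hη.le hG (hD2 s hs) hGB hLinv hs hy
  have hcontr : ∀ y ∈ B1, ‖PL (G 1 y)‖ ≤ ‖PL y‖ := fun y hy => calc
    ‖PL (G 1 y)‖ ≤ (1 + η * exp (-σ)) * exp (σ * 1) * ‖PL y‖ :=
        (hstepL y hy 1 ⟨zero_le_one, le_rfl⟩).2
    _ = (exp σ + η) * ‖PL y‖ := by rw [mul_one, add_mul, mul_assoc, ← exp_add]; simp
    _ ≤ ‖PL y‖ := mul_le_of_le_one_left (norm_nonneg _) hησ1.le
  have hmem := flow_nat_mem_B1 hG hcontr hx hPU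
  have hlo := exp_neg_mul_le_pow_succ (by linarith) hn hηt.le ht.1 hn2
  have hhi := pow_succ_le_exp_mul (by positivity) hn hηt.le ht.1 hn1
  obtain ⟨hL_lo, hL_hi⟩ := exp_bounds_of_pow_bounds (norm_nonneg _) hlo hhi
    (bounds_of_unit_time_bounds hG.2.1 hG.2.2 (by linarith) (by positivity) hstepL n hmem t ht)
  obtain ⟨hU_lo, hU_hi⟩ := exp_bounds_of_pow_bounds (norm_nonneg _) hlo hhi
    (bounds_of_unit_time_bounds hG.2.1 hG.2.2 (by linarith) (by positivity) hstepU n hmem t ht)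
  exact ⟨hL_lo, hL_hi, hU_lo, hU_hi⟩

theorem statement3
    (u σ μ η rB : ℝ) (hu : 0 < u) (hσ : σ < 0) (hμ : 0 < μ) (hη : 0 < η)
    (hB1B : B1 ⊆ Metric.closedBall (0 : R3) rB)
    (G : ℝ → R3 → R3) (hG : IsC1Flow G) (hG0 : ∀ t : ℝ, G t 0 = 0)
    (hD2 : ∀ t ∈ Icc (0:ℝ) 1, ∀ x ∈ B1, ∀ y : R3,
      ‖fderiv ℝ (G t) x y - Tmap σ μ u t y‖ ≤ η * ‖y‖)
    (hGB : ∀ t ∈ Icc (0:ℝ) 1, ∀ x ∈ B1, G t x ∈ Metric.closedBall (0 : R3) rB)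
    (hLinv : InvariantIn G Lset (Metric.closedBall 0 rB))
    (hUinv : InvariantIn G Uset (Metric.closedBall 0 rB))
    (ηt : ℝ) (hηt : 0 < ηt)
    (hησ : η < exp σ) (hησ1 : exp σ + η < 1)
    (hlog1 : Real.log (1 + η * exp (-σ)) < ηt)
    (hlog2 : Real.log (1 / (1 - η * exp (-σ))) < ηt)
    (n : ℕ) (hn : 0 < n)
    (hn1 : ((n : ℝ) + 1) / n * Real.log (1 + η * exp (-σ)) < ηt)
    (hn2 : ((n : ℝ) + 1) / n * Real.log (1 / (1 - η * exp (-σ))) < ηt)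
    (x : R3) (hx : x ∈ B1)
    (hPU : ∀ j : ℕ, j < n → ‖PU (G ((j : ℝ) + 1) x)‖ ≤ 1) :
    ∀ t ∈ Icc (0:ℝ) 1,
      exp ((σ - ηt) * (t + n)) * ‖PL x‖ ≤ ‖PL (G (t + n) x)‖ ∧
      ‖PL (G (t + n) x)‖ ≤ exp ((σ + ηt) * (t + n)) * ‖PL x‖ ∧
      exp ((u - ηt) * (t + n)) * ‖PU x‖ ≤ ‖PU (G (t + n) x)‖ ∧
      ‖PU (G (t + n) x)‖ ≤ exp ((u + ηt) * (t + n)) * ‖PU x‖ :=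
  statement3_general u σ μ η rB hu hσ hη G hG hD2 hGB hLinv hUinv ηt hηt hησ hησ1 n hn hn1 hn2 x hx
    hPU
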